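/- Define the shift map S on simple string diagrams by S(v¹,…,v^{k-1}) = (1, v¹,…,v^{k-1}) (prepending ℓ₁ = 1). Then for any (k-1)-dimensional simple string diagram D, any k-globular set X, and 0-cells x, y of X, there is a natural bijection between globular maps from the realization of D to the (k-1)-globular set Hom_X(x,y) and globular maps from the realization of S(D) to X sending the two 0-cells of the realization of S(D) to x and y respectively. -/

import Mathlib

/-- A simple k-string diagram. -/
structure SSD (k : ℕ) where
  ℓ : ℕ → ℕ
  base : ℓ 0 = 1
  high : ∀ i, k < i → ℓ i = 0
  v : ∀ i, Fin (ℓ (i + 1)) → Fin (ℓ i)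

/-- An n-globular set. -/
structure GSet (n : ℕ) where
  cells : ℕ → Type
  src : ∀ k, cells (k + 1) → cells k
  tgt : ∀ k, cells (k + 1) → cells k
  glob_ss : ∀ k (x : cells (k + 2)), src k (src (k + 1) x) = src k (tgt (k + 1) x)
  glob_ts : ∀ k (x : cells (k + 2)), tgt k (src (k + 1) x) = tgt k (tgt (k + 1) x)
  trunc : ∀ k, n < k → IsEmpty (cells k)

/-- Iterated source down to dimension 0. -/
def toSrc0 {n : ℕ} (X : GSet n) : ∀ m, X.cells m → X.cells 0
  | 0, z => z
  | m + 1, z => toSrc0 X m (X.src m z)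

/-- Iterated target down to dimension 0. -/
def toTgt0 {n : ℕ} (X : GSet n) : ∀ m, X.cells m → X.cells 0
  | 0, z => z
  | m + 1, z => toTgt0 X m (X.tgt m z)

/-- The shift `S(D) = (1, v¹, …, v^{k-1})` of a simple string diagram: prepend a single
cell at level 1 (shifting all levels up by one). -/
def shift {k : ℕ} (D : SSD k) : SSD (k + 1) where
  ℓ := fun m => match m with
    | 0 => 1
    | m + 1 => D.ℓ m
  base := rfl
  high := by
    intro i hi
    match i with
    | 0 => omega
    | m + 1 => exact D.high m (by omega)
  v := fun m => match m with
    | 0 => fun _ => ⟨0, Nat.one_pos⟩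
    | m + 1 => D.v m

/-- A labeling of a simple string diagram `D` in a globular set `X`: a choice of cell
for each node of `D`, whose source is the cell below it if it is the first node in its
fibre, and the target of the previous node in its fibre otherwise. -/
def IsLabeling {n k : ℕ} (X : GSet n) (D : SSD k)
    (x : ∀ m, Fin (D.ℓ m) → X.cells m) : Prop :=
  (∀ m (i : Fin (D.ℓ (m + 1))), (∀ j, D.v m j = D.v m i → i ≤ j) →
    X.src m (x (m + 1) i) = x m (D.v m i)) ∧
  (∀ m (i j : Fin (D.ℓ (m + 1))), D.v m i = D.v m j → i < j →
    (∀ l, D.v m l = D.v m i → l ≤ i ∨ j ≤ l) →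
    X.src m (x (m + 1) j) = X.tgt m (x (m + 1) i))

/- Every cell of `S(D)` of dimension at least 2 has the same 0-dimensional boundary
as its parent (induction along its fibre, using the globularity identities), and the unique 1-cell
of `S(D)` runs from `a` to `b`. So the cells of a labeling of `S(D)` above dimension 0 form a
labeling of `D` in `Hom_X(a,b)`, and conversely such a labeling extends by `a` in dimension 0. -/

section Globular

variable {n : ℕ} (X : GSet n)

lemma toSrc0_succ_src_eq_tgt (m : ℕ) (z : X.cells (m + 2)) :
    toSrc0 X (m + 1) (X.src (m + 1) z) = toSrc0 X (m + 1) (X.tgt (m + 1) z) :=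
  congrArg (toSrc0 X m) (X.glob_ss m z)

lemma toTgt0_succ_src_eq_tgt (m : ℕ) (z : X.cells (m + 2)) :
    toTgt0 X (m + 1) (X.src (m + 1) z) = toTgt0 X (m + 1) (X.tgt (m + 1) z) :=
  congrArg (toTgt0 X m) (X.glob_ts m z)

end Globular

namespace SSD

variable {k : ℕ} (D : SSD k)

lemma fin_ℓ_zero_eq (i j : Fin (D.ℓ 0)) : i = j :=
  Fin.ext (by have := i.isLt; have := j.isLt; have := D.base; omega)

theorem fibre_induction (m : ℕ) {P : Fin (D.ℓ (m + 1)) → Prop}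
    (first : ∀ i, (∀ j, D.v m j = D.v m i → i ≤ j) → P i)
    (next : ∀ i j, D.v m i = D.v m j → i < j →
      (∀ l, D.v m l = D.v m i → l ≤ i ∨ j ≤ l) → P i → P j)
    (i : Fin (D.ℓ (m + 1))) : P i := by
  refine WellFoundedLT.induction i fun i ih => ?_
  by_cases hfirst : ∀ j, D.v m j = D.v m i → i ≤ j
  · exact first i hfirst
  push Not at hfirst
  obtain ⟨j₀, hj₀v, hj₀i⟩ := hfirst
  classical
  let before := Finset.univ.filter fun l => D.v m l = D.v m i ∧ l < i
  obtain ⟨j, hj, hjmax⟩ := before.exists_max_image id ⟨j₀, by simp [before, hj₀v, hj₀i]⟩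
  simp only [before, Finset.mem_filter, Finset.mem_univ, true_and, id] at hj hjmax
  refine next j i hj.1 hj.2 (fun l hl => ?_) (ih j hj.2)
  by_cases hli : l < i
  · exact .inl (hjmax l ⟨hl.trans hj.1, hli⟩)
  · exact .inr (not_lt.mp hli)

end SSD

namespace IsLabeling

variable {n k : ℕ} {X : GSet n} {D : SSD k} {x : ∀ m, Fin (D.ℓ m) → X.cells m}

theorem toSrc0_toTgt0_eq_parent (hx : IsLabeling X D x) (m : ℕ) (i : Fin (D.ℓ (m + 2))) :
    toSrc0 X (m + 2) (x (m + 2) i) = toSrc0 X (m + 1) (x (m + 1) (D.v (m + 1) i)) ∧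
      toTgt0 X (m + 2) (x (m + 2) i) = toTgt0 X (m + 1) (x (m + 1) (D.v (m + 1) i)) := by
  induction i using D.fibre_induction (m + 1) with
  | first i hfirst =>
    have hsrc := hx.1 (m + 1) i hfirst
    exact ⟨congrArg (toSrc0 X (m + 1)) hsrc,
      (toTgt0_succ_src_eq_tgt X m _).symm.trans (congrArg (toTgt0 X (m + 1)) hsrc)⟩
  | next i j hv hij hnext ih =>
    have hsrc := hx.2 (m + 1) i j hv hij hnext
    rw [← hv]
    constructor
    · calc toSrc0 X (m + 2) (x (m + 2) j)
          = toSrc0 X (m + 1) (X.tgt (m + 1) (x (m + 2) i)) := congrArg (toSrc0 X (m + 1)) hsrc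
        _ = _ := (toSrc0_succ_src_eq_tgt X m _).symm.trans ih.1
    · calc toTgt0 X (m + 2) (x (m + 2) j)
          = toTgt0 X (m + 1) (X.tgt (m + 1) (x (m + 2) i)) :=
            (toTgt0_succ_src_eq_tgt X m _).symm.trans (congrArg (toTgt0 X (m + 1)) hsrc)
        _ = _ := ih.2

end IsLabeling

section Shift

variable {k : ℕ} {D : SSD k} {X : GSet (k + 1)} {a b : X.cells 0}

theorem IsLabeling.shift_toSrc0_toTgt0 {x : ∀ m, Fin ((shift D).ℓ m) → X.cells m}
    (hx : IsLabeling X (shift D) x) (ha : ∀ i0, x 0 i0 = a) (hb : ∀ i1, X.tgt 0 (x 1 i1) = b) :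
    ∀ m (i : Fin ((shift D).ℓ (m + 1))),
      toSrc0 X (m + 1) (x (m + 1) i) = a ∧ toTgt0 X (m + 1) (x (m + 1) i) = b
  | 0, i =>
    ⟨(hx.1 0 i fun j _ => (D.fin_ℓ_zero_eq i j).le).trans (ha _), hb i⟩
  | m + 1, i => by
    rw [(hx.toSrc0_toTgt0_eq_parent m i).1, (hx.toSrc0_toTgt0_eq_parent m i).2]
    exact hx.shift_toSrc0_toTgt0 ha hb m _

variable (D X a b)

/-- Labelings of `D` in `Hom_X(a,b)`, with a cell of `Hom_X(a,b)` of dimension `m` stored as the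
underlying `(m + 1)`-cell of `X`. -/
def IsHomLabeling (y : ∀ m, Fin (D.ℓ m) → X.cells (m + 1)) : Prop :=
  (∀ m (i : Fin (D.ℓ m)), toSrc0 X (m + 1) (y m i) = a ∧ toTgt0 X (m + 1) (y m i) = b) ∧
    (∀ m (i : Fin (D.ℓ (m + 1))), (∀ j, D.v m j = D.v m i → i ≤ j) →
      X.src (m + 1) (y (m + 1) i) = y m (D.v m i)) ∧
    (∀ m (i j : Fin (D.ℓ (m + 1))), D.v m i = D.v m j → i < j →
      (∀ l, D.v m l = D.v m i → l ≤ i ∨ j ≤ l) →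
      X.src (m + 1) (y (m + 1) j) = X.tgt (m + 1) (y (m + 1) i))

def extendByBase (y : ∀ m, Fin (D.ℓ m) → X.cells (m + 1)) :
    ∀ m, Fin ((shift D).ℓ m) → X.cells m
  | 0 => fun _ => a
  | m + 1 => y m

variable {D X a b}

theorem IsHomLabeling.isLabeling_extendByBase {y : ∀ m, Fin (D.ℓ m) → X.cells (m + 1)}
    (hy : IsHomLabeling D X a b y) : IsLabeling X (shift D) (extendByBase D X a y) := by
  refine ⟨fun m i hfirst => ?_, fun m i j hv hij hnext => ?_⟩
  · cases m with
    | zero => exact (hy.1 0 i).1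
    | succ m => exact hy.2.1 m i hfirst
  · cases m with
    | zero => exact absurd hij (D.fin_ℓ_zero_eq i j).not_lt
    | succ m => exact hy.2.2 m i j hv hij hnext

theorem IsLabeling.isHomLabeling_shift {x : ∀ m, Fin ((shift D).ℓ m) → X.cells m}
    (hx : IsLabeling X (shift D) x) (ha : ∀ i0, x 0 i0 = a) (hb : ∀ i1, X.tgt 0 (x 1 i1) = b) :
    IsHomLabeling D X a b fun m => x (m + 1) :=
  ⟨hx.shift_toSrc0_toTgt0 ha hb, fun m => hx.1 (m + 1), fun m => hx.2 (m + 1)⟩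

variable (D X a b)

def homLabelingEquiv :
    { y // IsHomLabeling D X a b y } ≃
      { x : ∀ m, Fin ((shift D).ℓ m) → X.cells m //
        IsLabeling X (shift D) x ∧ (∀ i0, x 0 i0 = a) ∧ ∀ i1, X.tgt 0 (x 1 i1) = b } where
  toFun y := ⟨extendByBase D X a y.1, y.2.isLabeling_extendByBase, fun _ => rfl,
    fun i1 => (y.2.1 0 i1).2⟩
  invFun x := ⟨fun m => x.1 (m + 1), x.2.1.isHomLabeling_shift x.2.2.1 x.2.2.2⟩
  left_inv _ := rfl
  right_inv x := by
    ext m : 2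
    cases m with
    | zero => exact funext fun i0 => (x.2.2.1 i0).symm
    | succ m => rfl

end Shift

/-- Labelings of a (k-1)-dimensional simple string diagram `D` in the hom globular set
`Hom_X(a,b)` (cells: cells of `X` one dimension higher with iterated source `a` and
iterated target `b`) are in natural bijection with labelings of the shifted diagram
`S(D)` in `X` sending its two 0-cells to `a` and `b`. -/
theorem stmt18 (k : ℕ) (D : SSD k) (X : GSet (k + 1)) (a b : X.cells 0) :
    ∃ e : { y : ∀ m, Fin (D.ℓ m) → X.cells (m + 1) //
        (∀ m (i : Fin (D.ℓ m)),
          toSrc0 X (m + 1) (y m i) = a ∧ toTgt0 X (m + 1) (y m i) = b) ∧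
        (∀ m (i : Fin (D.ℓ (m + 1))), (∀ j, D.v m j = D.v m i → i ≤ j) →
          X.src (m + 1) (y (m + 1) i) = y m (D.v m i)) ∧
        (∀ m (i j : Fin (D.ℓ (m + 1))), D.v m i = D.v m j → i < j →
          (∀ l, D.v m l = D.v m i → l ≤ i ∨ j ≤ l) →
          X.src (m + 1) (y (m + 1) j) = X.tgt (m + 1) (y (m + 1) i)) } ≃
      { x : ∀ m, Fin ((shift D).ℓ m) → X.cells m //
        IsLabeling X (shift D) x ∧
        (∀ i0 : Fin ((shift D).ℓ 0), x 0 i0 = a) ∧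
        (∀ i1 : Fin ((shift D).ℓ 1), X.tgt 0 (x 1 i1) = b) },
      ∀ l m (i : Fin (D.ℓ m)) (i' : Fin ((shift D).ℓ (m + 1))),
        (i : ℕ) = (i' : ℕ) → (e l).val (m + 1) i' = l.val m i :=
  ⟨homLabelingEquiv D X a b, fun y m _ _ h => congrArg (y.1 m) (Fin.ext h.symm)⟩
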